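/- arXiv:1106.3907 — 3 statements merged into one kernel-verified Lean document; each statement's English description precedes it below -/
import Mathlib

section
/- Assume M_{Y*}(ρ) = 0 and let χ^j (1 ≤ j ≤ N) and χ⁰ be solutions of the cell problems in the context. Then: (i) for each 1 ≤ l ≤ N, Σ_{j=1}^N ∫_{Y*} a_lj(y) (∂χ⁰/∂y_j)(y) dy = ∫_{Y*} ρ(y) χ^l(y) dy = Σ_{i,k=1}^N ∫_{Y*} a_ik(y) (∂χ^l/∂y_k)(∂χ⁰/∂y_i) dy; (ii) ∫_{Y*} ρ(y) χ⁰(y) dy = Σ_{i,j=1}^N ∫_{Y*} a_ij(y) (∂χ⁰/∂y_j)(∂χ⁰/∂y_i) dy =: ν² ≥ 0; (iii) if in addition ρ does not vanish almost everywhere on Y*, then ν² > 0. -/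
open MeasureTheory Filter Topology Pointwise NNReal ENNReal

noncomputable section

namespace TwoScalePaper

abbrev Vec (N : ℕ) := Fin N → ℝ

/-- The unit cube `Y = (0,1)^N`. -/
def cubeY (N : ℕ) : Set (Vec N) := Set.univ.pi fun _ => Set.Ioo (0:ℝ) 1

/-- The real vector associated to an integer vector. -/
def intVec (N : ℕ) (k : Fin N → ℤ) : Vec N := fun i => (k i : ℝ)

/-- `Y`-periodicity of a function on `ℝ^N`. -/
def YPeriodic (N : ℕ) (f : Vec N → ℝ) : Prop :=
  ∀ (k : Fin N → ℤ) (y : Vec N), f (y + intVec N k) = f y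

/-- Partial derivative in direction `i`. -/
def pderiv (N : ℕ) (i : Fin N) (φ : Vec N → ℝ) (x : Vec N) : ℝ :=
  fderiv ℝ φ x (Pi.single i 1)

/-- Smooth compactly supported test function on an open set `Ω`. -/
def IsTestFun (N : ℕ) (Ω : Set (Vec N)) (φ : Vec N → ℝ) : Prop :=
  ContDiff ℝ (⊤ : ℕ∞) φ ∧ HasCompactSupport φ ∧ tsupport φ ⊆ Ω

/-- `g` is the weak gradient of `u` on `Ω`. -/
def HasWeakGrad (N : ℕ) (Ω : Set (Vec N)) (u : Vec N → ℝ) (g : Vec N → Vec N) : Prop :=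
  ∀ φ, IsTestFun N Ω φ → ∀ i,
    ∫ x in Ω, u x * pderiv N i φ x = - ∫ x in Ω, g x i * φ x

/-- Membership in `H¹₀(Ω)`, with weak gradient `Du`. -/
def MemH10 (N : ℕ) (Ω : Set (Vec N)) (u : Vec N → ℝ) (Du : Vec N → Vec N) : Prop :=
  MemLp u 2 (volume.restrict Ω) ∧ MemLp Du 2 (volume.restrict Ω) ∧
  HasWeakGrad N Ω u Du ∧
  ∃ φ : ℕ → Vec N → ℝ, (∀ n, IsTestFun N Ω (φ n)) ∧
    Tendsto (fun n => eLpNorm (u - φ n) 2 (volume.restrict Ω)) atTop (𝓝 0) ∧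
    Tendsto (fun n => eLpNorm (fun x => Du x - fun i => pderiv N i (φ n) x) 2
      (volume.restrict Ω)) atTop (𝓝 0)

/-- Membership in `H¹_per(Y)`, with `Y`-periodic weak gradient `Du`. -/
def MemH1perY (N : ℕ) (u : Vec N → ℝ) (Du : Vec N → Vec N) : Prop :=
  YPeriodic N u ∧ (∀ i, YPeriodic N fun y => Du y i) ∧
  MemLp u 2 (volume.restrict (cubeY N)) ∧ MemLp Du 2 (volume.restrict (cubeY N)) ∧
  ∀ φ : Vec N → ℝ, ContDiff ℝ (⊤ : ℕ∞) φ → HasCompactSupport φ → ∀ i,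
    ∫ y, u y * pderiv N i φ y = - ∫ y, Du y i * φ y

/-- `Θ = ⋃_{k ∈ ℤ^N} (k + T)`. -/
def ThetaSet (N : ℕ) (T : Set (Vec N)) : Set (Vec N) :=
  ⋃ k : Fin N → ℤ, (· + intVec N k) '' T

/-- `G = ℝ^N \ Θ`. -/
def GSet (N : ℕ) (T : Set (Vec N)) : Set (Vec N) := (ThetaSet N T)ᶜ

/-- `Y* = Y \ T`. -/
def Ystar (N : ℕ) (T : Set (Vec N)) : Set (Vec N) := cubeY N \ T

/-- Membership in `H¹_per(Y*)`: `Y`-periodic, square integrable on `Y*` together with a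
`Y`-periodic weak gradient on the open set `G`. -/
def MemH1perStar (N : ℕ) (T : Set (Vec N)) (u : Vec N → ℝ) (Du : Vec N → Vec N) : Prop :=
  YPeriodic N u ∧ (∀ i, YPeriodic N fun y => Du y i) ∧
  MemLp u 2 (volume.restrict (Ystar N T)) ∧ MemLp Du 2 (volume.restrict (Ystar N T)) ∧
  ∀ φ : Vec N → ℝ, IsTestFun N (GSet N T) φ → ∀ i,
    ∫ y in GSet N T, u y * pderiv N i φ y = - ∫ y in GSet N T, Du y i * φ y

/-- The scaled translated hole `ε(k+T)`. -/
def hole (N : ℕ) (ε : ℝ) (T : Set (Vec N)) (k : Fin N → ℤ) : Set (Vec N) :=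
  (fun t => ε • (t + intVec N k)) '' T

/-- The union `T^ε` of all holes `ε(k+T)` entirely contained in `Ω`. -/
def TEps (N : ℕ) (ε : ℝ) (T : Set (Vec N)) (Ω : Set (Vec N)) : Set (Vec N) :=
  ⋃ k ∈ {k : Fin N → ℤ | hole N ε T k ⊆ Ω}, hole N ε T k

/-- The perforated domain `Ω^ε = Ω \ T^ε`. -/
def OmegaEps (N : ℕ) (ε : ℝ) (T : Set (Vec N)) (Ω : Set (Vec N)) : Set (Vec N) :=
  Ω \ TEps N ε T Ω

/-- `Q^ε = Ω \ εΘ`. -/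
def QEps (N : ℕ) (ε : ℝ) (T : Set (Vec N)) (Ω : Set (Vec N)) : Set (Vec N) :=
  Ω \ (ε • ThetaSet N T)

/-- Two-scale convergence in `L²(Ω)` of `(u_ε)_{ε ∈ E}` to `u₀ ∈ L²(Ω × Y)`. -/
def TwoScaleConv (N : ℕ) (Ω : Set (Vec N)) (E : Set ℝ) (u : ℝ → Vec N → ℝ)
    (u0 : Vec N → Vec N → ℝ) : Prop :=
  ∀ ψ : Vec N → Vec N → ℝ, Continuous (Function.uncurry ψ) →
    (∃ C, ∀ x y, |ψ x y| ≤ C) → (∀ x, YPeriodic N (ψ x)) →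
    Tendsto (fun ε => ∫ x in Ω, u ε x * ψ x (ε⁻¹ • x)) (𝓝[E] (0:ℝ))
      (𝓝 (∫ x in Ω, ∫ y in cubeY N, u0 x y * ψ x y))

/-- Symmetric uniformly elliptic `Y`-periodic bounded measurable coefficients. -/
structure EllipticCoeffs (N : ℕ) where
  a : Fin N → Fin N → Vec N → ℝ
  meas : ∀ i j, Measurable (a i j)
  bdd : ∃ C, ∀ i j y, |a i j y| ≤ C
  per : ∀ i j, YPeriodic N (a i j)
  symm : ∀ i j y, a i j y = a j i y
  alpha : ℝ
  alpha_pos : 0 < alpha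
  elliptic : ∀ (y : Vec N) (ξ : Vec N),
    alpha * ∑ i, ξ i ^ 2 ≤ ∑ i, ∑ j, a i j y * ξ j * ξ i

/-- The cell problem (3.9) for the direction `j`. -/
def CellSolution (N : ℕ) (T : Set (Vec N)) (A : EllipticCoeffs N) (j : Fin N)
    (χ : Vec N → ℝ) (Dχ : Vec N → Vec N) : Prop :=
  MemH1perStar N T χ Dχ ∧ (∫ y in Ystar N T, χ y) = 0 ∧
  ∀ v Dv, MemH1perStar N T v Dv →
    ∑ i, ∑ k, ∫ y in Ystar N T, A.a i k y * Dχ y k * Dv y i =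
      ∑ k, ∫ y in Ystar N T, A.a k j y * Dv y k

/-- The cell problem (3.91) with right-hand side `ρ`. -/
def CellSolution0 (N : ℕ) (T : Set (Vec N)) (A : EllipticCoeffs N) (ρ : Vec N → ℝ)
    (χ : Vec N → ℝ) (Dχ : Vec N → Vec N) : Prop :=
  MemH1perStar N T χ Dχ ∧ (∫ y in Ystar N T, χ y) = 0 ∧
  ∀ v Dv, MemH1perStar N T v Dv →
    ∑ i, ∑ k, ∫ y in Ystar N T, A.a i k y * Dχ y k * Dv y i =
      ∫ y in Ystar N T, ρ y * v y

/-- The homogenized coefficients `q_{ij}` built from the cell solutions' gradients. -/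
def qCoeff (N : ℕ) (T : Set (Vec N)) (A : EllipticCoeffs N)
    (Dχ : Fin N → Vec N → Vec N) (i j : Fin N) : ℝ :=
  (∫ y in Ystar N T, A.a i j y) - ∑ l, ∫ y in Ystar N T, A.a i l y * Dχ j y l

/-- An admissible corrector `u₁` with `y`-gradient `D1`. -/
def AdmissibleCorrector (N : ℕ) (T : Set (Vec N)) (Ω : Set (Vec N))
    (u1 : Vec N → Vec N → ℝ) (D1 : Vec N → Vec N → Vec N) : Prop :=
  Measurable (Function.uncurry u1) ∧ Measurable (Function.uncurry D1) ∧
  (∀ x, MemH1perY N (u1 x) (D1 x)) ∧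
  (∀ x, (∫ y in Ystar N T, u1 x y) = 0) ∧
  Integrable (fun p : Vec N × Vec N => (u1 p.1 p.2) ^ 2 + ∑ i, (D1 p.1 p.2 i) ^ 2)
    ((volume.restrict Ω).prod (volume.restrict (cubeY N)))

/-- Boundedness in `H¹`-norm, uniformly over `ε ∈ E`. -/
def H1Bounded (N : ℕ) (Ω : Set (Vec N)) (E : Set ℝ) (u : ℝ → Vec N → ℝ)
    (Du : ℝ → Vec N → Vec N) : Prop :=
  ∃ C : ℝ≥0, ∀ ε ∈ E, eLpNorm (u ε) 2 (volume.restrict Ω) ≤ (C : ℝ≥0∞) ∧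
    eLpNorm (Du ε) 2 (volume.restrict Ω) ≤ (C : ℝ≥0∞)

/-- Two-scale convergence of the gradients `Du_ε` to `Du₀ + D_y u₁` tested against
products `φ(x) g(x/ε)` with `g` `Y`-periodic and (everywhere) bounded measurable. -/
def GradTwoScale (N : ℕ) (Ω : Set (Vec N)) (E : Set ℝ) (Du : ℝ → Vec N → Vec N)
    (Du0 : Vec N → Vec N) (D1 : Vec N → Vec N → Vec N) : Prop :=
  ∀ j : Fin N, ∀ φ, IsTestFun N Ω φ → ∀ g : Vec N → ℝ, Measurable g → YPeriodic N g →
    (∃ C, ∀ y, |g y| ≤ C) →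
    Tendsto (fun ε => ∫ x in Ω, Du ε x j * φ x * g (ε⁻¹ • x)) (𝓝[E] (0:ℝ))
      (𝓝 (∫ x in Ω, ∫ y in cubeY N, (Du0 x j + D1 x y j) * φ x * g y))

/-- The Poincaré–Wirtinger hypothesis on `H¹_per(Y*)`. -/
def PoincareWirtinger (N : ℕ) (T : Set (Vec N)) : Prop :=
  ∃ C > (0:ℝ), ∀ v Dv, MemH1perStar N T v Dv →
    ∫ y in Ystar N T, (v y - (volume (Ystar N T)).toReal⁻¹ * ∫ z in Ystar N T, v z) ^ 2 ≤
      C * ∫ y in Ystar N T, ∑ i, (Dv y i) ^ 2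



section Aux

variable {N : ℕ} {T : Set (Vec N)}

lemma measurableSet_cubeY : MeasurableSet (cubeY N) :=
  MeasurableSet.univ_pi fun _ => measurableSet_Ioo

lemma isOpen_cubeY : IsOpen (cubeY N) :=
  isOpen_set_pi Set.finite_univ fun _ _ => isOpen_Ioo

lemma measurableSet_Ystar (hT : IsCompact T) : MeasurableSet (Ystar N T) :=
  measurableSet_cubeY.diff hT.isClosed.measurableSet

lemma isOpen_Ystar (hT : IsCompact T) : IsOpen (Ystar N T) :=
  isOpen_cubeY.sdiff hT.isClosed

lemma Ystar_subset_cubeY : Ystar N T ⊆ cubeY N := Set.diff_subset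

lemma volume_Ystar_lt_top : volume (Ystar N T) < ⊤ := by
  have hc : IsCompact (Set.univ.pi fun _ : Fin N => Set.Icc (0:ℝ) 1) :=
    isCompact_univ_pi fun _ => isCompact_Icc
  refine lt_of_le_of_lt (measure_mono ?_) hc.measure_lt_top
  intro y hy i _
  exact Set.Ioo_subset_Icc_self (Ystar_subset_cubeY hy i (Set.mem_univ i))

lemma isFiniteMeasure_Ystar :
    IsFiniteMeasure ((volume : Measure (Vec N)).restrict (Ystar N T)) := by
  constructor
  rw [Measure.restrict_apply_univ]
  exact volume_Ystar_lt_top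

lemma memL2_mul_integrable {α : Type*} [MeasurableSpace α] {μ : Measure α} {f g : α → ℝ}
    (hf : MemLp f 2 μ) (hg : MemLp g 2 μ) : Integrable (fun y => f y * g y) μ := by
  refine Integrable.mono' ((hf.integrable_sq.add hg.integrable_sq).const_mul (2⁻¹ : ℝ))
    (hf.aestronglyMeasurable.mul hg.aestronglyMeasurable) ?_
  filter_upwards with y
  simp only [Real.norm_eq_abs, abs_mul, Pi.add_apply]
  nlinarith [sq_nonneg (|f y| - |g y|), sq_abs (f y), sq_abs (g y), abs_nonneg (f y),
    abs_nonneg (g y)]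

lemma memL2_proj {α : Type*} [MeasurableSpace α] {μ : Measure α} {Du : α → Vec N}
    (h : MemLp Du 2 μ) (k : Fin N) : MemLp (fun y => Du y k) 2 μ := by
  have := (ContinuousLinearMap.proj (R := ℝ) (φ := fun _ : Fin N => ℝ) k).comp_memLp' h
  exact this

lemma integrand_integrable {μ : Measure (Vec N)} (A : EllipticCoeffs N) (i k : Fin N)
    {u w : Vec N → Vec N} (hu : MemLp u 2 μ) (hw : MemLp w 2 μ) :
    Integrable (fun y => A.a i k y * u y k * w y i) μ := by
  obtain ⟨C, hC⟩ := A.bdd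
  have h1 : Integrable (fun y => A.a i k y * (u y k * w y i)) μ :=
    (memL2_mul_integrable (memL2_proj hu k) (memL2_proj hw i)).bdd_mul (c := C)
      (A.meas i k).aestronglyMeasurable (Filter.Eventually.of_forall fun y => by simpa using hC i k y)
  simpa [mul_assoc] using h1

lemma Bsymm (A : EllipticCoeffs N) (u w : Vec N → Vec N) :
    (∑ i, ∑ k, ∫ y in Ystar N T, A.a i k y * u y k * w y i)
      = ∑ i, ∑ k, ∫ y in Ystar N T, A.a i k y * w y k * u y i := by
  have h : ∀ i k : Fin N, (∫ y in Ystar N T, A.a i k y * u y k * w y i)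
      = ∫ y in Ystar N T, A.a k i y * w y i * u y k := by
    intro i k
    refine integral_congr_ae (Filter.Eventually.of_forall fun y => ?_)
    show A.a i k y * u y k * w y i = A.a k i y * w y i * u y k
    rw [A.symm i k y]; ring
  simp_rw [h]
  exact Finset.sum_comm

lemma periodization (hN : 0 < N) (hT : IsCompact T) {g : Vec N → ℝ}
    (hg : ContDiff ℝ ((⊤ : ℕ∞) : WithTop ℕ∞) g) (hgc : HasCompactSupport g)
    (hgs : tsupport g ⊆ Ystar N T) :
    ∃ v Dv, MemH1perStar N T v Dv ∧ ∀ y ∈ cubeY N, v y = g y := by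
  classical
  haveI : Nonempty (Fin N) := ⟨⟨0, hN⟩⟩
  obtain ⟨δ, δpos, hδ⟩ := hgc.exists_thickening_subset_open (isOpen_Ystar hT) hgs
  set δ₀ : ℝ := min (δ / 2) 2⁻¹ with hδ₀def
  have hδ₀pos : 0 < δ₀ := lt_min (by linarith) (by norm_num)
  have hδ₀half : δ₀ ≤ 2⁻¹ := min_le_right _ _
  have hδ₀δ : δ₀ ≤ δ / 2 := min_le_left _ _
  have hbound : ∀ s ∈ tsupport g, ∀ i, δ₀ < s i ∧ s i < 1 - δ₀ := by
    intro s hs i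
    have hball : ∀ z : Vec N, dist z s < δ → z ∈ cubeY N := fun z hz =>
      Ystar_subset_cubeY (hδ (Metric.ball_subset_thickening hs δ (Metric.mem_ball.mpr hz)))
    have h₁ : (fun j => if j = i then s i + δ / 2 else s j) ∈ cubeY N := by
      refine hball _ ((dist_pi_lt_iff δpos).mpr fun j => ?_)
      rcases eq_or_ne j i with hj | hj
      · subst hj
        rw [if_pos rfl, Real.dist_eq]
        have he : s j + δ / 2 - s j = δ / 2 := by ring
        rw [he, abs_of_pos (by linarith)]
        linarith
      · rw [if_neg hj, dist_self]; exact δpos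
    have h₂ : (fun j => if j = i then s i - δ / 2 else s j) ∈ cubeY N := by
      refine hball _ ((dist_pi_lt_iff δpos).mpr fun j => ?_)
      rcases eq_or_ne j i with hj | hj
      · subst hj
        rw [if_pos rfl, Real.dist_eq]
        have he : s j - δ / 2 - s j = -(δ / 2) := by ring
        rw [he, abs_neg, abs_of_pos (by linarith)]
        linarith
      · rw [if_neg hj, dist_self]; exact δpos
    have h₁' : s i + δ / 2 ∈ Set.Ioo (0:ℝ) 1 := by simpa using h₁ i (Set.mem_univ i)
    have h₂' : s i - δ / 2 ∈ Set.Ioo (0:ℝ) 1 := by simpa using h₂ i (Set.mem_univ i)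
    constructor
    · have := h₂'.1
      have := hδ₀δ
      linarith
    · have := h₁'.2
      linarith
  set v : Vec N → ℝ := fun y => g (fun i => Int.fract (y i)) with hvdef
  have hvper : YPeriodic N v := by
    intro k y
    show g _ = g _
    congr 1
    funext i
    exact Int.fract_add_intCast (y i) (k i)
  have hvsmooth : ContDiff ℝ ((⊤ : ℕ∞) : WithTop ℕ∞) v := by
    rw [contDiff_iff_contDiffAt]
    intro y
    by_cases hy : ∃ i, Int.fract (y i) = 0
    · obtain ⟨i, hi⟩ := hy
      refine (contDiffAt_const (c := (0:ℝ))).congr_of_eventuallyEq ?_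
      refine Filter.eventually_of_mem (Metric.ball_mem_nhds y hδ₀pos) fun z hz => ?_
      have hzi : |z i - y i| < δ₀ := by
        have h1 := dist_le_pi_dist z y i
        rw [Real.dist_eq] at h1
        exact lt_of_le_of_lt h1 (Metric.mem_ball.mp hz)
      have hyi : y i = (⌊y i⌋ : ℝ) := by
        have h := Int.fract_add_floor (y i)
        rw [hi, zero_add] at h
        exact h.symm
      have hnot : (fun j => Int.fract (z j)) ∉ tsupport g := by
        intro hmem
        obtain ⟨h1, h2⟩ := hbound _ hmem i
        have habs := abs_lt.mp hzi
        rcases le_or_gt ((⌊y i⌋ : ℤ) : ℝ) (z i) with hc | hc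
        · have hfl : ⌊z i⌋ = ⌊y i⌋ := by
            rw [Int.floor_eq_iff]
            refine ⟨hc, ?_⟩
            push_cast
            rw [← hyi]
            have : (2:ℝ)⁻¹ < 1 := by norm_num
            linarith
          have hfr : Int.fract (z i) = z i - (⌊y i⌋ : ℝ) := by
            rw [Int.fract, hfl]
          rw [hfr] at h1
          linarith
        · have hfl : ⌊z i⌋ = ⌊y i⌋ - 1 := by
            rw [Int.floor_eq_iff]
            constructor
            · push_cast
              rw [← hyi]
              have : (2:ℝ)⁻¹ < 1 := by norm_num
              linarith
            · push_cast
              rw [← hyi]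
              linarith
          have hfr : Int.fract (z i) = z i - (⌊y i⌋ : ℝ) + 1 := by
            rw [Int.fract, hfl]
            push_cast
            ring
          rw [hfr] at h2
          linarith
      show g (fun j => Int.fract (z j)) = (0:ℝ)
      exact image_eq_zero_of_notMem_tsupport hnot
    · push_neg at hy
      set ε : ℝ := Finset.univ.inf' Finset.univ_nonempty
        (fun i => min (Int.fract (y i)) (1 - Int.fract (y i))) with hεdef
      have hεpos : 0 < ε := by
        rw [hεdef, Finset.lt_inf'_iff]
        intro i _
        refine lt_min (lt_of_le_of_ne (Int.fract_nonneg _) (Ne.symm (hy i))) ?_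
        linarith [Int.fract_lt_one (y i)]
      have hsm : ContDiffAt ℝ ((⊤ : ℕ∞) : WithTop ℕ∞)
          (fun z : Vec N => g (z - intVec N fun i => ⌊y i⌋)) y :=
        (hg.comp (contDiff_id.sub contDiff_const)).contDiffAt
      refine hsm.congr_of_eventuallyEq ?_
      refine Filter.eventually_of_mem (Metric.ball_mem_nhds y hεpos) fun z hz => ?_
      have hfl : ∀ i, ⌊z i⌋ = ⌊y i⌋ := by
        intro i
        have hzi : |z i - y i| < ε := by
          have h1 := dist_le_pi_dist z y i
          rw [Real.dist_eq] at h1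
          exact lt_of_le_of_lt h1 (Metric.mem_ball.mp hz)
        have hεle : ε ≤ min (Int.fract (y i)) (1 - Int.fract (y i)) :=
          Finset.inf'_le _ (Finset.mem_univ i)
        obtain ⟨hεle1, hεle2⟩ := le_min_iff.mp hεle
        have habs := abs_lt.mp hzi
        have hfr := Int.fract_add_floor (y i)
        rw [Int.floor_eq_iff]
        constructor
        · linarith
        · push_cast
          linarith
      show g _ = g _
      congr 1
      funext i
      have : (z - intVec N fun j => ⌊y j⌋) i = z i - (⌊y i⌋ : ℝ) := rfl
      rw [this, Int.fract, hfl i]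
  have hvcont : Continuous v := hvsmooth.continuous
  have hone : (1 : WithTop ℕ∞) ≤ ((⊤ : ℕ∞) : WithTop ℕ∞) := by
    exact_mod_cast (le_top : (1 : ℕ∞) ≤ ⊤)
  have hvdiff : Differentiable ℝ v := hvsmooth.differentiable (by simp)
  set Dv : Vec N → Vec N := fun y i => fderiv ℝ v y (Pi.single i 1) with hDvdef
  have hfder_per : ∀ (k : Fin N → ℤ) (y : Vec N),
      fderiv ℝ v (y + intVec N k) = fderiv ℝ v y := by
    intro k y
    have e1 : v ∘ (fun x : Vec N => x + intVec N k) = v := funext fun x => hvper k x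
    have h2 : HasFDerivAt (v ∘ (fun x : Vec N => x + intVec N k))
        ((fderiv ℝ v (y + intVec N k)).comp (ContinuousLinearMap.id ℝ (Vec N))) y :=
      (hvdiff (y + intVec N k)).hasFDerivAt.comp y ((hasFDerivAt_id y).add_const (intVec N k))
    rw [e1, ContinuousLinearMap.comp_id] at h2
    exact h2.fderiv.symm
  have hDvper : ∀ i, YPeriodic N fun y => Dv y i := by
    intro i k y
    show fderiv ℝ v (y + intVec N k) (Pi.single i 1) = fderiv ℝ v y (Pi.single i 1)
    rw [hfder_per]
  have hDvcont : Continuous Dv := by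
    refine continuous_pi fun i => ?_
    exact (hvsmooth.continuous_fderiv (by simp)).clm_apply continuous_const
  obtain ⟨Cg, hCg⟩ := hgc.exists_bound_of_continuous hg.continuous
  have hKicc : IsCompact (Set.univ.pi fun _ : Fin N => Set.Icc (0:ℝ) 1) :=
    isCompact_univ_pi fun _ => isCompact_Icc
  obtain ⟨CD, hCD⟩ := hKicc.exists_bound_of_continuousOn hDvcont.continuousOn
  have hDv_eq : ∀ z : Vec N, Dv z = Dv (fun i => Int.fract (z i)) := by
    intro z
    funext i
    have he : (fun j => Int.fract (z j)) + intVec N (fun j => ⌊z j⌋) = z :=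
      funext fun j => Int.fract_add_floor (z j)
    have h2 : Dv ((fun j => Int.fract (z j)) + intVec N (fun j => ⌊z j⌋)) i
        = Dv (fun j => Int.fract (z j)) i := hDvper i _ _
    rw [he] at h2
    exact h2
  have hDvbdd : ∀ z, ‖Dv z‖ ≤ CD := by
    intro z
    rw [hDv_eq z]
    exact hCD _ fun i _ => ⟨Int.fract_nonneg _, (Int.fract_lt_one _).le⟩
  haveI := isFiniteMeasure_Ystar (N := N) (T := T)
  refine ⟨v, Dv, ⟨hvper, hDvper, ?_, ?_, ?_⟩, ?_⟩
  · exact MemLp.of_bound hvcont.aestronglyMeasurable Cg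
      (Filter.Eventually.of_forall fun y => hCg _)
  · exact MemLp.of_bound hDvcont.aestronglyMeasurable CD
      (Filter.Eventually.of_forall fun y => hDvbdd y)
  · intro φ hφ i
    obtain ⟨hφs, hφc, hφsupp⟩ := hφ
    have hφ1 : Differentiable ℝ φ := hφs.differentiable (by simp)
    have hφfc : Continuous fun x => fderiv ℝ φ x (Pi.single i 1) :=
      (hφs.continuous_fderiv (by simp)).clm_apply continuous_const
    have hpd0 : ∀ x, x ∉ GSet N T → v x * pderiv N i φ x = 0 := by
      intro x hx
      have hts : x ∉ tsupport φ := fun h => hx (hφsupp h)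
      have hz : fderiv ℝ φ x = 0 := by
        by_contra h
        exact hts (support_fderiv_subset ℝ (Function.mem_support.mpr h))
      show v x * fderiv ℝ φ x (Pi.single i 1) = 0
      rw [hz]
      simp
    have hψ0 : ∀ x, x ∉ GSet N T → Dv x i * φ x = 0 := by
      intro x hx
      have hts : x ∉ tsupport φ := fun h => hx (hφsupp h)
      rw [image_eq_zero_of_notMem_tsupport hts, mul_zero]
    rw [setIntegral_eq_integral_of_forall_compl_eq_zero hpd0,
        setIntegral_eq_integral_of_forall_compl_eq_zero hψ0]
    have hint1 : Integrable (fun x => fderiv ℝ v x (Pi.single i 1) * φ x) volume := by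
      refine Continuous.integrable_of_hasCompactSupport
        (((hvsmooth.continuous_fderiv (by simp)).clm_apply continuous_const).mul hφs.continuous) ?_
      exact hφc.mul_left
    have hint2 : Integrable (fun x => v x * fderiv ℝ φ x (Pi.single i 1)) volume := by
      refine Continuous.integrable_of_hasCompactSupport (hvcont.mul hφfc) ?_
      exact (hφc.fderiv_apply ℝ (Pi.single i 1)).mul_left
    have hint3 : Integrable (fun x => v x * φ x) volume :=
      Continuous.integrable_of_hasCompactSupport (hvcont.mul hφs.continuous) hφc.mul_left
    have hibp := integral_mul_fderiv_eq_neg_fderiv_mul_of_integrable hint1 hint2 hint3 (fun x _ => hvdiff x) (fun x _ => hφ1 x)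
    simpa only [pderiv] using hibp
  · intro y hy
    show g _ = g _
    congr 1
    funext i
    exact Int.fract_eq_self.mpr ⟨(hy i (Set.mem_univ i)).1.le, (hy i (Set.mem_univ i)).2⟩

end Aux

/-- identities relating the cell solutions `χ^j`, `χ⁰` and the constant
`ν²` in the case `M_{Y*}(ρ) = 0`, and positivity of `ν²`. -/
theorem statement11 (N : ℕ) (hN : 2 ≤ N) (T : Set (Vec N)) (hT : IsCompact T)
    (hTY : T ⊆ cubeY N) (A : EllipticCoeffs N)
    (ρ : Vec N → ℝ) (hρmeas : Measurable ρ) (hρbdd : ∃ C, ∀ y, |ρ y| ≤ C)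
    (hρper : YPeriodic N ρ) (hMρ : (∫ y in Ystar N T, ρ y) = 0)
    (χ : Fin N → Vec N → ℝ) (Dχ : Fin N → Vec N → Vec N)
    (hχ : ∀ j, CellSolution N T A j (χ j) (Dχ j))
    (χ0 : Vec N → ℝ) (Dχ0 : Vec N → Vec N) (hχ0 : CellSolution0 N T A ρ χ0 Dχ0) :
    -- (i)
    (∀ l : Fin N,
      (∑ j, ∫ y in Ystar N T, A.a l j y * Dχ0 y j) = (∫ y in Ystar N T, ρ y * χ l y) ∧
      (∫ y in Ystar N T, ρ y * χ l y) =
        ∑ i, ∑ k, ∫ y in Ystar N T, A.a i k y * Dχ l y k * Dχ0 y i) ∧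
    -- (ii)
    ((∫ y in Ystar N T, ρ y * χ0 y) =
      ∑ i, ∑ j, ∫ y in Ystar N T, A.a i j y * Dχ0 y j * Dχ0 y i) ∧
    (0 ≤ ∑ i, ∑ j, ∫ y in Ystar N T, A.a i j y * Dχ0 y j * Dχ0 y i) ∧
    -- (iii)
    (¬ (∀ᵐ y ∂(volume.restrict (Ystar N T)), ρ y = 0) →
      0 < ∑ i, ∑ j, ∫ y in Ystar N T, A.a i j y * Dχ0 y j * Dχ0 y i) := by
  classical
  obtain ⟨hmem0, hmean0, hvar0⟩ := hχ0
  have hDχ0L2 : MemLp Dχ0 2 (volume.restrict (Ystar N T)) := hmem0.2.2.2.1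
  have hInt : ∀ i k : Fin N,
      Integrable (fun y => A.a i k y * Dχ0 y k * Dχ0 y i) (volume.restrict (Ystar N T)) :=
    fun i k => integrand_integrable A i k hDχ0L2 hDχ0L2
  have hsum : (∑ i, ∑ j, ∫ y in Ystar N T, A.a i j y * Dχ0 y j * Dχ0 y i)
      = ∫ y in Ystar N T, ∑ i, ∑ j, A.a i j y * Dχ0 y j * Dχ0 y i := by
    rw [integral_finset_sum _ fun i _ => integrable_finset_sum _ fun j _ => hInt i j]
    exact Finset.sum_congr rfl fun i _ => (integral_finset_sum _ fun j _ => hInt i j).symm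
  have hnn : 0 ≤ ∑ i, ∑ j, ∫ y in Ystar N T, A.a i j y * Dχ0 y j * Dχ0 y i := by
    rw [hsum]
    refine integral_nonneg fun y => ?_
    show (0:ℝ) ≤ ∑ i, ∑ j, A.a i j y * Dχ0 y j * Dχ0 y i
    have h := A.elliptic y (Dχ0 y)
    have h2 : 0 ≤ A.alpha * ∑ i, Dχ0 y i ^ 2 :=
      mul_nonneg A.alpha_pos.le (Finset.sum_nonneg fun i _ => sq_nonneg _)
    linarith
  refine ⟨?_, (hvar0 χ0 Dχ0 hmem0).symm, hnn, ?_⟩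
  · intro l
    obtain ⟨hmeml, -, hvarl⟩ := hχ l
    have h1 := hvar0 (χ l) (Dχ l) hmeml
    have h2 := hvarl χ0 Dχ0 hmem0
    have h3 : (∑ j, ∫ y in Ystar N T, A.a l j y * Dχ0 y j)
        = ∑ k, ∫ y in Ystar N T, A.a k l y * Dχ0 y k := by
      refine Finset.sum_congr rfl fun j _ => ?_
      refine integral_congr_ae (Filter.Eventually.of_forall fun y => ?_)
      show A.a l j y * Dχ0 y j = A.a j l y * Dχ0 y j
      rw [A.symm l j y]
    refine ⟨?_, ?_⟩
    · rw [h3, ← h2, Bsymm A (Dχ l) Dχ0, h1]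
    · rw [← h1, Bsymm A Dχ0 (Dχ l)]
  · intro hne
    by_contra hpos
    have hzeroS : (∑ i, ∑ j, ∫ y in Ystar N T, A.a i j y * Dχ0 y j * Dχ0 y i) = 0 :=
      le_antisymm (not_lt.mp hpos) hnn
    have hquadInt : Integrable (fun y => ∑ i, Dχ0 y i ^ 2) (volume.restrict (Ystar N T)) :=
      integrable_finset_sum _ fun i _ => (memL2_proj hDχ0L2 i).integrable_sq
    have hle : A.alpha * ∫ y in Ystar N T, ∑ i, Dχ0 y i ^ 2 ≤ 0 := by
      rw [← integral_const_mul]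
      calc ∫ y in Ystar N T, A.alpha * ∑ i, Dχ0 y i ^ 2
          ≤ ∫ y in Ystar N T, ∑ i, ∑ j, A.a i j y * Dχ0 y j * Dχ0 y i :=
            integral_mono (hquadInt.const_mul _)
              (integrable_finset_sum _ fun i _ => integrable_finset_sum _ fun j _ => hInt i j)
              (fun y => A.elliptic y (Dχ0 y))
        _ = 0 := by rw [← hsum, hzeroS]
    have hInonneg : 0 ≤ ∫ y in Ystar N T, ∑ i, Dχ0 y i ^ 2 :=
      integral_nonneg fun y => show (0:ℝ) ≤ _ from Finset.sum_nonneg fun i _ => sq_nonneg _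
    have hq0 : (∫ y in Ystar N T, ∑ i, Dχ0 y i ^ 2) = 0 := by
      nlinarith [A.alpha_pos]
    have hae0 : (fun y => ∑ i, Dχ0 y i ^ 2) =ᵐ[volume.restrict (Ystar N T)] 0 :=
      (integral_eq_zero_iff_of_nonneg
        (fun y => show (0:ℝ) ≤ _ from Finset.sum_nonneg fun i _ => sq_nonneg _)
        hquadInt).mp hq0
    have hae : ∀ᵐ y ∂(volume.restrict (Ystar N T)), ∀ i, Dχ0 y i = 0 := by
      filter_upwards [hae0] with y hy i
      have h0 : ∑ j, Dχ0 y j ^ 2 = 0 := by simpa using hy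
      have h1 := (Finset.sum_eq_zero_iff_of_nonneg fun j _ => sq_nonneg (Dχ0 y j)).mp h0 i
        (Finset.mem_univ i)
      exact pow_eq_zero_iff two_ne_zero |>.mp h1
    have hzero : ∀ v Dv, MemH1perStar N T v Dv → (∫ y in Ystar N T, ρ y * v y) = 0 := by
      intro v Dv hv
      rw [← hvar0 v Dv hv]
      refine Finset.sum_eq_zero fun i _ => Finset.sum_eq_zero fun k _ => ?_
      have heq : (fun y => A.a i k y * Dχ0 y k * Dv y i) =ᵐ[volume.restrict (Ystar N T)]
          (fun _ => (0:ℝ)) := by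
        filter_upwards [hae] with y hy
        simp [hy k]
      calc (∫ y in Ystar N T, A.a i k y * Dχ0 y k * Dv y i)
          = ∫ _ in Ystar N T, (0:ℝ) := integral_congr_ae heq
        _ = 0 := by simp
    have hloc : LocallyIntegrableOn ρ (Ystar N T) volume := by
      obtain ⟨C, hC⟩ := hρbdd
      have hli : LocallyIntegrable ρ volume := by
        intro x
        refine ⟨Metric.ball x 1, Metric.ball_mem_nhds x one_pos, ?_⟩
        refine Integrable.mono' (g := fun _ => C)
          (integrableOn_const (C := C) measure_ball_lt_top.ne)
          hρmeas.aestronglyMeasurable ?_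
        exact Filter.Eventually.of_forall fun y => by simpa using hC y
      exact hli.locallyIntegrableOn _
    have hae_ball : ∀ᵐ x ∂(volume : Measure (Vec N)), x ∈ Ystar N T → ρ x = 0 := by
      refine (isOpen_Ystar hT).ae_eq_zero_of_integral_contDiff_smul_eq_zero hloc ?_
      intro g hg hgc hgs
      obtain ⟨v, Dv, hmemv, hveq⟩ := periodization (by omega : 0 < N) hT hg hgc hgs
      have h1 : (∫ x, g x • ρ x) = ∫ x in Ystar N T, g x • ρ x :=
        (setIntegral_eq_integral_of_forall_compl_eq_zero fun x hx => by
          rw [image_eq_zero_of_notMem_tsupport fun h => hx (hgs h), zero_smul]).symm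
      rw [h1]
      have h2 : (∫ x in Ystar N T, g x • ρ x) = ∫ x in Ystar N T, ρ x * v x := by
        refine setIntegral_congr_fun (measurableSet_Ystar hT) fun x hx => ?_
        rw [smul_eq_mul, mul_comm (g x) (ρ x), ← hveq x (Ystar_subset_cubeY hx)]
      rw [h2]
      exact hzero v Dv hmemv
    exact hne ((ae_restrict_iff' (measurableSet_Ystar hT)).mpr hae_ball)


end TwoScalePaper
end
end

section
/- Let Ω be a bounded open set in ℝ^N and let ρ ∈ L^∞(ℝ^N) be Y-periodic. Let (v_ε)_{ε∈E} ⊂ L²(Ω) with v_ε → v strongly in L²(Ω), and let (w_ε)_{ε∈E} ⊂ L²(Ω) with sup_{ε∈E} ‖w_ε‖_{L²(Ω)} < ∞. Then ∫_{Ω^ε \ Q^ε} ρ(x/ε) v_ε(x) w_ε(x) dx → 0 as E ∋ ε → 0. -/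
open MeasureTheory Filter Topology Pointwise NNReal ENNReal

noncomputable section

namespace TwoScalePaper

private lemma toReal_eLpNorm_two {α : Type*} {m : MeasurableSpace α} {μ : Measure α} {f : α → ℝ}
    (hf : MemLp f 2 μ) :
    (eLpNorm f 2 μ).toReal = (∫ x, ‖f x‖ ^ (2:ℝ) ∂μ) ^ ((1:ℝ)/2) := by
  rw [hf.eLpNorm_eq_integral_rpow_norm two_ne_zero ENNReal.ofNat_ne_top]
  rw [ENNReal.toReal_ofReal (Real.rpow_nonneg
    (integral_nonneg fun a => Real.rpow_nonneg (norm_nonneg _) _) _)]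
  norm_num

private lemma holder_two {α : Type*} {m : MeasurableSpace α} {μ : Measure α} {f g : α → ℝ}
    (hf : MemLp f 2 μ) (hg : MemLp g 2 μ) :
    ∫ x, ‖f x‖ * ‖g x‖ ∂μ ≤ (eLpNorm f 2 μ).toReal * (eLpNorm g 2 μ).toReal := by
  have h2 : (ENNReal.ofReal (2:ℝ)) = 2 := by norm_num
  have hpq : Real.HolderConjugate 2 2 := Real.holderConjugate_iff.mpr ⟨by norm_num, by norm_num⟩
  have hf2 : MemLp f (ENNReal.ofReal (2:ℝ)) μ := by rw [h2]; exact hf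
  have hg2 : MemLp g (ENNReal.ofReal (2:ℝ)) μ := by rw [h2]; exact hg
  have key := integral_mul_norm_le_Lp_mul_Lq hpq hf2 hg2
  rw [toReal_eLpNorm_two hf, toReal_eLpNorm_two hg]
  exact key

private lemma integrable_norm_mul {α : Type*} {m : MeasurableSpace α} {μ : Measure α} {f g : α → ℝ}
    (hf : MemLp f 2 μ) (hg : MemLp g 2 μ) :
    Integrable (fun x => ‖f x‖ * ‖g x‖) μ := by
  refine Integrable.mono' (hf.integrable_sq.add hg.integrable_sq)
    (hf.1.norm.mul hg.1.norm) (Eventually.of_forall fun x => ?_)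
  simp only [Pi.add_apply, Real.norm_eq_abs, abs_mul, abs_abs]
  nlinarith [sq_nonneg (|f x| - |g x|), sq_abs (f x), sq_abs (g x), abs_nonneg (f x),
    abs_nonneg (g x)]

private lemma layer_subset (N : ℕ) (T : Set (Vec N)) (hTY : T ⊆ cubeY N)
    (Ω : Set (Vec N)) {ε : ℝ} (hε : 0 < ε) :
    OmegaEps N ε T Ω \ QEps N ε T Ω ⊆ {x | x ∈ Ω ∧ Metric.infDist x Ωᶜ ≤ ε} := by
  rintro x ⟨⟨hxΩ, hxT⟩, hxQ⟩
  refine ⟨hxΩ, ?_⟩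
  have hxΘ : x ∈ ε • ThetaSet N T := by
    by_contra h
    exact hxQ ⟨hxΩ, h⟩
  obtain ⟨y, hy, rfl⟩ := Set.mem_smul_set.mp hxΘ
  obtain ⟨k, hk⟩ := Set.mem_iUnion.mp hy
  obtain ⟨t, ht, rfl⟩ := hk
  have hxh : ε • (t + intVec N k) ∈ hole N ε T k := ⟨t, ht, rfl⟩
  have hns : ¬ hole N ε T k ⊆ Ω := fun hsub => hxT (Set.mem_biUnion hsub hxh)
  obtain ⟨z, hz, hzΩ⟩ := Set.not_subset.mp hns
  obtain ⟨s, hs, rfl⟩ := hz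
  have hd : dist (ε • (t + intVec N k)) (ε • (s + intVec N k)) ≤ ε := by
    rw [dist_smul₀]
    have h1 : dist (t + intVec N k) (s + intVec N k) ≤ 1 := by
      rw [dist_add_right]
      refine (dist_pi_le_iff zero_le_one).2 fun i => ?_
      have ht1 := Set.mem_univ_pi.mp (hTY ht) i
      have hs1 := Set.mem_univ_pi.mp (hTY hs) i
      rw [Real.dist_eq, abs_sub_le_iff]
      constructor <;> [linarith [ht1.1, ht1.2, hs1.1, hs1.2]; linarith [ht1.1, ht1.2, hs1.1, hs1.2]]
    rw [Real.norm_eq_abs, abs_of_pos hε]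
    nlinarith [h1, hε.le, @dist_nonneg _ _ (t + intVec N k) (s + intVec N k)]
  exact (Metric.infDist_le_dist_of_mem (Set.mem_compl hzΩ)).trans hd

/-- integrals over the boundary-layer set `Ω^ε \ Q^ε` vanish in the
limit. -/
theorem statement13 (N : ℕ) (hN : 2 ≤ N) (Ω : Set (Vec N)) (hΩo : IsOpen Ω)
    (hΩb : Bornology.IsBounded Ω) (T : Set (Vec N)) (hT : IsCompact T) (hTY : T ⊆ cubeY N)
    (E : Set ℝ) (hE : E ⊆ Set.Ioo 0 1) (hacc : ClusterPt (0:ℝ) (𝓟 E))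
    (ρ : Vec N → ℝ) (hρmeas : Measurable ρ) (hρbdd : ∃ C, ∀ y, |ρ y| ≤ C)
    (hρper : YPeriodic N ρ)
    (v w : ℝ → Vec N → ℝ) (v0 : Vec N → ℝ)
    (hv : ∀ ε ∈ E, MemLp (v ε) 2 (volume.restrict Ω))
    (hv0 : MemLp v0 2 (volume.restrict Ω))
    (hvc : Tendsto (fun ε => eLpNorm (v ε - v0) 2 (volume.restrict Ω)) (𝓝[E] (0:ℝ)) (𝓝 0))
    (hw : ∀ ε ∈ E, MemLp (w ε) 2 (volume.restrict Ω))
    (hwb : ∃ C : ℝ≥0, ∀ ε ∈ E, eLpNorm (w ε) 2 (volume.restrict Ω) ≤ (C : ℝ≥0∞)) :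
    Tendsto (fun ε => ∫ x in OmegaEps N ε T Ω \ QEps N ε T Ω,
        ρ (ε⁻¹ • x) * v ε x * w ε x) (𝓝[E] (0:ℝ)) (𝓝 0) := by
  obtain ⟨C₀, hC₀⟩ := hρbdd
  obtain ⟨Cw, hCw⟩ := hwb
  set Cρ : ℝ := max C₀ 0 with hCρdef
  have hCρ0 : (0:ℝ) ≤ Cρ := le_max_right _ _
  have hCρ : ∀ y, |ρ y| ≤ Cρ := fun y => (hC₀ y).trans (le_max_left _ _)
  set B : ℝ → Set (Vec N) := fun δ => {x | x ∈ Ω ∧ Metric.infDist x Ωᶜ ≤ δ} with hBdef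
  have hBmeas : ∀ δ, MeasurableSet (B δ) := fun δ =>
    hΩo.measurableSet.inter (((Metric.continuous_infDist_pt Ωᶜ).measurable) measurableSet_Iic)
  have hBΩ : ∀ δ, B δ ⊆ Ω := fun δ x hx => hx.1
  have hle : ∀ δ, volume.restrict (B δ) ≤ volume.restrict Ω :=
    fun δ => Measure.restrict_mono (hBΩ δ) le_rfl
  have hIntv0sq : Integrable (fun x => ‖v0 x‖ ^ (2:ℝ)) (volume.restrict Ω) := by
    have := hv0.integrable_norm_rpow two_ne_zero ENNReal.ofNat_ne_top
    simpa using this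
  set F : ℝ → ℝ := fun δ => ∫ x in B δ, ‖v0 x‖ ^ (2:ℝ) with hFdef
  have hFeq : ∀ δ, F δ = ∫ x, Set.indicator (B δ) (fun x => ‖v0 x‖ ^ (2:ℝ)) x
      ∂(volume.restrict Ω) := by
    intro δ
    rw [integral_indicator (hBmeas δ), Measure.restrict_restrict (hBmeas δ),
      Set.inter_eq_self_of_subset_left (hBΩ δ)]
  have hΩc_ne : Ωᶜ.Nonempty := by
    obtain ⟨R, hR⟩ := isBounded_iff_forall_norm_le.mp hΩb
    have : Nonempty (Fin N) := ⟨⟨0, by omega⟩⟩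
    refine ⟨fun _ => |R| + 1, fun hmem => ?_⟩
    have h1 := hR _ hmem
    rw [pi_norm_const, Real.norm_eq_abs, abs_of_nonneg (by positivity)] at h1
    have := le_abs_self R
    linarith
  have hFtendsto : Tendsto F (𝓝[>] (0:ℝ)) (𝓝 0) := by
    have hlim : ∀ᵐ x ∂(volume.restrict Ω),
        Tendsto (fun δ => Set.indicator (B δ) (fun x => ‖v0 x‖ ^ (2:ℝ)) x)
        (𝓝[>] (0:ℝ)) (𝓝 0) := by
      filter_upwards [ae_restrict_mem hΩo.measurableSet] with x hx
      have hxc : x ∉ Ωᶜ := fun hc => hc hx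
      have hd : 0 < Metric.infDist x Ωᶜ :=
        ((hΩo.isClosed_compl).notMem_iff_infDist_pos hΩc_ne).mp hxc
      have hev : ∀ᶠ δ in 𝓝[>] (0:ℝ),
          Set.indicator (B δ) (fun x => ‖v0 x‖ ^ (2:ℝ)) x = 0 := by
        filter_upwards [mem_nhdsWithin_of_mem_nhds (Iio_mem_nhds hd)] with δ hδ
        exact Set.indicator_of_notMem (fun hmem => absurd hmem.2 (not_le.mpr hδ)) _
      exact Tendsto.congr' (hev.mono fun δ h => h.symm) tendsto_const_nhds
    have hbd : ∀ δ : ℝ, ∀ᵐ x ∂(volume.restrict Ω),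
        ‖Set.indicator (B δ) (fun x => ‖v0 x‖ ^ (2:ℝ)) x‖ ≤ ‖v0 x‖ ^ (2:ℝ) := by
      intro δ
      refine Eventually.of_forall fun x => ?_
      by_cases hxB : x ∈ B δ
      · rw [Set.indicator_of_mem hxB, Real.norm_eq_abs,
          abs_of_nonneg (Real.rpow_nonneg (norm_nonneg _) _)]
      · rw [Set.indicator_of_notMem hxB]
        simpa using Real.rpow_nonneg (norm_nonneg (v0 x)) (2:ℝ)
    have hdct := tendsto_integral_filter_of_dominated_convergence
      (fun x => ‖v0 x‖ ^ (2:ℝ))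
      (Eventually.of_forall fun δ => hIntv0sq.aestronglyMeasurable.indicator (hBmeas δ))
      (Eventually.of_forall hbd) hIntv0sq hlim
    rw [integral_zero] at hdct
    exact hdct.congr fun δ => (hFeq δ).symm
  have hEle : 𝓝[E] (0:ℝ) ≤ 𝓝[>] (0:ℝ) := nhdsWithin_mono 0 (fun x hx => (hE hx).1)
  have hFsqrt : Tendsto (fun δ => F δ ^ ((1:ℝ)/2)) (𝓝[E] (0:ℝ)) (𝓝 0) := by
    have hc : ContinuousAt (fun t : ℝ => t ^ ((1:ℝ)/2)) 0 :=
      Real.continuousAt_rpow_const 0 _ (Or.inr (by norm_num))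
    have h := hc.tendsto.comp (hFtendsto.mono_left hEle)
    simpa [Real.zero_rpow (by norm_num : (1:ℝ)/2 ≠ 0), Function.comp_def] using h
  have hA : Tendsto (fun ε => (eLpNorm (v ε - v0) 2 (volume.restrict Ω)).toReal)
      (𝓝[E] (0:ℝ)) (𝓝 0) := by
    have h := (ENNReal.tendsto_toReal (a := 0) (by simp)).comp hvc
    simpa [Function.comp_def] using h
  have hwnorm : ∀ ε ∈ E, (eLpNorm (w ε) 2 (volume.restrict Ω)).toReal ≤ (Cw:ℝ) := by
    intro ε hε
    have h := ENNReal.toReal_mono ENNReal.coe_ne_top (hCw ε hε)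
    simpa using h
  have hbtend : Tendsto (fun ε => Cρ * ((eLpNorm (v ε - v0) 2 (volume.restrict Ω)).toReal
      * (Cw:ℝ) + F ε ^ ((1:ℝ)/2) * (Cw:ℝ))) (𝓝[E] (0:ℝ)) (𝓝 0) := by
    have h := ((hA.mul_const (Cw:ℝ)).add (hFsqrt.mul_const (Cw:ℝ))).const_mul Cρ
    simpa using h
  refine squeeze_zero_norm' ?_ hbtend
  filter_upwards [self_mem_nhdsWithin] with ε hεE
  have hε01 := hE hεE
  have hvε := hv ε hεE
  have hwε := hw ε hεE
  have hdiff : MemLp (v ε - v0) 2 (volume.restrict Ω) := hvε.sub hv0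
  have hSB : OmegaEps N ε T Ω \ QEps N ε T Ω ⊆ B ε := layer_subset N T hTY Ω hε01.1
  have hle1 : volume.restrict (OmegaEps N ε T Ω \ QEps N ε T Ω) ≤ volume.restrict (B ε) :=
    Measure.restrict_mono hSB le_rfl
  have hleS : volume.restrict (OmegaEps N ε T Ω \ QEps N ε T Ω) ≤ volume.restrict Ω :=
    hle1.trans (hle ε)
  have hvB := hvε.mono_measure (hle ε)
  have hwB := hwε.mono_measure (hle ε)
  have hv0B := hv0.mono_measure (hle ε)
  have hdiffB := hdiff.mono_measure (hle ε)
  have hint1 : Integrable (fun x => Cρ * (‖v ε x‖ * ‖w ε x‖))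
      (volume.restrict (OmegaEps N ε T Ω \ QEps N ε T Ω)) :=
    ((integrable_norm_mul hvε hwε).const_mul Cρ).mono_measure hleS
  calc ‖∫ x in OmegaEps N ε T Ω \ QEps N ε T Ω, ρ (ε⁻¹ • x) * v ε x * w ε x‖
      ≤ ∫ x in OmegaEps N ε T Ω \ QEps N ε T Ω, ‖ρ (ε⁻¹ • x) * v ε x * w ε x‖ :=
        norm_integral_le_integral_norm _
    _ ≤ ∫ x in OmegaEps N ε T Ω \ QEps N ε T Ω, Cρ * (‖v ε x‖ * ‖w ε x‖) := by
        refine integral_mono_of_nonneg (Eventually.of_forall fun x => norm_nonneg _) hint1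
          (Eventually.of_forall fun x => ?_)
        simp only [Real.norm_eq_abs, abs_mul]
        rw [mul_assoc]
        exact mul_le_mul_of_nonneg_right (hCρ _) (by positivity)
    _ = Cρ * ∫ x in OmegaEps N ε T Ω \ QEps N ε T Ω, ‖v ε x‖ * ‖w ε x‖ :=
        integral_const_mul _ _
    _ ≤ Cρ * ∫ x in B ε, ‖v ε x‖ * ‖w ε x‖ := by
        refine mul_le_mul_of_nonneg_left ?_ hCρ0
        exact integral_mono_measure hle1 (Eventually.of_forall fun x => by positivity)
          (integrable_norm_mul hvB hwB)
    _ ≤ Cρ * ∫ x in B ε, (‖(v ε - v0) x‖ * ‖w ε x‖ + ‖v0 x‖ * ‖w ε x‖) := by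
        refine mul_le_mul_of_nonneg_left ?_ hCρ0
        refine integral_mono (integrable_norm_mul hvB hwB)
          ((integrable_norm_mul hdiffB hwB).add (integrable_norm_mul hv0B hwB)) fun x => ?_
        have h : ‖v ε x‖ ≤ ‖(v ε - v0) x‖ + ‖v0 x‖ := by
          simpa using norm_add_le (v ε x - v0 x) (v0 x)
        calc ‖v ε x‖ * ‖w ε x‖ ≤ (‖(v ε - v0) x‖ + ‖v0 x‖) * ‖w ε x‖ :=
              mul_le_mul_of_nonneg_right h (norm_nonneg _)
          _ = ‖(v ε - v0) x‖ * ‖w ε x‖ + ‖v0 x‖ * ‖w ε x‖ := by ring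
    _ ≤ Cρ * ((eLpNorm (v ε - v0) 2 (volume.restrict Ω)).toReal * (Cw:ℝ)
          + F ε ^ ((1:ℝ)/2) * (Cw:ℝ)) := by
        refine mul_le_mul_of_nonneg_left ?_ hCρ0
        rw [integral_add (integrable_norm_mul hdiffB hwB) (integrable_norm_mul hv0B hwB)]
        refine add_le_add ?_ ?_
        · refine (integral_mono_measure (hle ε) (Eventually.of_forall fun x => by positivity)
            (integrable_norm_mul hdiff hwε)).trans ?_
          refine (holder_two hdiff hwε).trans ?_
          exact mul_le_mul_of_nonneg_left (hwnorm ε hεE) ENNReal.toReal_nonneg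
        · refine (holder_two hv0B hwB).trans ?_
          rw [toReal_eLpNorm_two hv0B]
          refine mul_le_mul_of_nonneg_left ?_
            (Real.rpow_nonneg (integral_nonneg fun x => Real.rpow_nonneg (norm_nonneg _) _) _)
          have h4 : eLpNorm (w ε) 2 (volume.restrict (B ε)) ≤ (Cw:ℝ≥0∞) :=
            (eLpNorm_mono_measure _ (hle ε)).trans (hCw ε hεE)
          have h5 := ENNReal.toReal_mono ENNReal.coe_ne_top h4
          simpa using h5

end TwoScalePaper
end
end

section
/- Assume the cell problem solutions χ^j (1 ≤ j ≤ N) exist as in the context and let q_ij be the homogenized coefficients. Then q_ij = q_ji for all 1 ≤ i,j ≤ N, and for every ξ ∈ ℝ^N, writing χ_ξ = Σ_{j=1}^N ξ_j χ^j, one has the energy representation Σ_{i,j=1}^N q_ij ξ_j ξ_i = Σ_{i,k=1}^N ∫_{Y*} a_ik(y) (ξ_k − ∂χ_ξ/∂y_k(y)) (ξ_i − ∂χ_ξ/∂y_i(y)) dy ≥ α ∫_{Y*} |ξ − D_yχ_ξ(y)|² dy ≥ 0. -/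
open MeasureTheory Filter Topology Pointwise NNReal ENNReal

noncomputable section

namespace TwoScalePaper

section Aux14

private lemma l2_mul_integrable14 {α} [MeasurableSpace α] {μ : Measure α} {f g : α → ℝ}
    (hf : MemLp f 2 μ) (hg : MemLp g 2 μ) : Integrable (fun y => f y * g y) μ := by
  refine (hf.integrable_sq.add hg.integrable_sq).mono' (hf.1.mul hg.1) ?_
  filter_upwards with y
  simp only [Pi.add_apply, Real.norm_eq_abs]
  rw [abs_mul]
  nlinarith [sq_nonneg (|f y| - |g y|), sq_abs (f y), sq_abs (g y), abs_nonneg (f y),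
    abs_nonneg (g y)]

private lemma isFiniteYstar14 (N : ℕ) (T : Set (Vec N)) :
    IsFiniteMeasure (volume.restrict (Ystar N T)) := by
  constructor
  rw [Measure.restrict_apply_univ]
  calc volume (Ystar N T) ≤ volume (cubeY N) := measure_mono Set.diff_subset
    _ = 1 := by rw [cubeY, volume_pi_pi]; simp
    _ < ⊤ := by norm_num

private lemma sum4_swap14 {N : ℕ} (t : Fin N → Fin N → Fin N → Fin N → ℝ) :
    ∑ i, ∑ j, ∑ p, ∑ k, t i j p k = ∑ p, ∑ k, ∑ j, ∑ i, t i j p k :=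
  calc ∑ i, ∑ j, ∑ p, ∑ k, t i j p k
      = ∑ i, ∑ p, ∑ j, ∑ k, t i j p k :=
        Finset.sum_congr rfl fun _ _ => Finset.sum_comm
    _ = ∑ p, ∑ i, ∑ j, ∑ k, t i j p k := Finset.sum_comm
    _ = ∑ p, ∑ i, ∑ k, ∑ j, t i j p k :=
        Finset.sum_congr rfl fun _ _ => Finset.sum_congr rfl fun _ _ => Finset.sum_comm
    _ = ∑ p, ∑ k, ∑ i, ∑ j, t i j p k :=
        Finset.sum_congr rfl fun _ _ => Finset.sum_comm
    _ = ∑ p, ∑ k, ∑ j, ∑ i, t i j p k :=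
        Finset.sum_congr rfl fun _ _ => Finset.sum_congr rfl fun _ _ => Finset.sum_comm

end Aux14

/-- symmetry and energy representation (hence positivity) of the
homogenized coefficients `q_{ij}`. -/
theorem statement14 (N : ℕ) (hN : 2 ≤ N) (T : Set (Vec N)) (hT : IsCompact T)
    (hTY : T ⊆ cubeY N) (A : EllipticCoeffs N)
    (χ : Fin N → Vec N → ℝ) (Dχ : Fin N → Vec N → Vec N)
    (hχ : ∀ j, CellSolution N T A j (χ j) (Dχ j)) :
    (∀ i j, qCoeff N T A Dχ i j = qCoeff N T A Dχ j i) ∧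
    ∀ ξ : Vec N,
      (∑ i, ∑ j, qCoeff N T A Dχ i j * ξ j * ξ i =
        ∑ i, ∑ k, ∫ y in Ystar N T,
          A.a i k y * (ξ k - ∑ j, ξ j * Dχ j y k) * (ξ i - ∑ j, ξ j * Dχ j y i)) ∧
      (A.alpha * ∫ y in Ystar N T, ∑ i, (ξ i - ∑ j, ξ j * Dχ j y i) ^ 2 ≤
        ∑ i, ∑ k, ∫ y in Ystar N T,
          A.a i k y * (ξ k - ∑ j, ξ j * Dχ j y k) * (ξ i - ∑ j, ξ j * Dχ j y i)) ∧
      (0 ≤ A.alpha * ∫ y in Ystar N T, ∑ i, (ξ i - ∑ j, ξ j * Dχ j y i) ^ 2) := by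
  classical
  obtain ⟨Ca, hCa⟩ := A.bdd
  haveI : IsFiniteMeasure (volume.restrict (Ystar N T)) := isFiniteYstar14 N T
  -- component-wise square integrability of the gradients
  have hD : ∀ j i : Fin N, MemLp (fun y => Dχ j y i) 2 (volume.restrict (Ystar N T)) :=
    fun j i =>
      (ContinuousLinearMap.proj (R := ℝ) (φ := fun _ : Fin N => ℝ) i).comp_memLp'
        (hχ j).1.2.2.2.1
  -- triple products with the coefficients are integrable
  have hI3 : ∀ (p k : Fin N) (f g : Vec N → ℝ),
      MemLp f 2 (volume.restrict (Ystar N T)) → MemLp g 2 (volume.restrict (Ystar N T)) →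
      Integrable (fun y => A.a p k y * f y * g y) (volume.restrict (Ystar N T)) := by
    intro p k f g hf hg
    have h1 : Integrable (fun y => A.a p k y * (f y * g y)) (volume.restrict (Ystar N T)) :=
      (l2_mul_integrable14 hf hg).bdd_mul (A.meas p k).aestronglyMeasurable
        (c := Ca) (ae_of_all _ fun y => by simpa [Real.norm_eq_abs] using hCa p k y)
    simpa [mul_assoc] using h1
  have hone : MemLp (fun _ : Vec N => (1:ℝ)) 2 (volume.restrict (Ystar N T)) := memLp_const 1
  have hIa : ∀ p k : Fin N, Integrable (A.a p k) (volume.restrict (Ystar N T)) := fun p k => by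
    simpa using hI3 p k _ _ hone hone
  have hIaf : ∀ (p k : Fin N) (f : Vec N → ℝ), MemLp f 2 (volume.restrict (Ystar N T)) →
      Integrable (fun y => A.a p k y * f y) (volume.restrict (Ystar N T)) := fun p k f hf => by
    simpa using hI3 p k _ _ hone hf
  have hW : ∀ (ξ : Vec N) (i : Fin N),
      MemLp (fun y => ξ i - ∑ j, ξ j * Dχ j y i) 2 (volume.restrict (Ystar N T)) := by
    intro ξ i
    exact (memLp_const (ξ i)).sub
      (memLp_finset_sum Finset.univ fun j _ => (hD j i).const_mul (ξ j))
  have hWb : ∀ (j k : Fin N) (c : ℝ),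
      MemLp (fun y => c - Dχ j y k) 2 (volume.restrict (Ystar N T)) := fun j k c =>
    (memLp_const c).sub (hD j k)
  -- expansion of a single integral
  have key1 : ∀ p k j i : Fin N,
      (∫ y in Ystar N T, A.a p k y * ((if k = j then (1:ℝ) else 0) - Dχ j y k)
          * ((if p = i then (1:ℝ) else 0) - Dχ i y p)) =
        (if k = j then (1:ℝ) else 0) * (if p = i then (1:ℝ) else 0)
            * (∫ y in Ystar N T, A.a p k y)
          - (if k = j then (1:ℝ) else 0) * (∫ y in Ystar N T, A.a p k y * Dχ i y p)
          - (if p = i then (1:ℝ) else 0) * (∫ y in Ystar N T, A.a p k y * Dχ j y k)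
          + ∫ y in Ystar N T, A.a p k y * Dχ j y k * Dχ i y p := by
    intro p k j i
    set c1 := (if k = j then (1:ℝ) else 0) with hc1
    set c2 := (if p = i then (1:ℝ) else 0) with hc2
    have hptw : ∀ y : Vec N, A.a p k y * (c1 - Dχ j y k) * (c2 - Dχ i y p)
        = (c1 * c2 * A.a p k y - c1 * (A.a p k y * Dχ i y p))
          - (c2 * (A.a p k y * Dχ j y k) - A.a p k y * Dχ j y k * Dχ i y p) := fun y => by ring
    calc (∫ y in Ystar N T, A.a p k y * (c1 - Dχ j y k) * (c2 - Dχ i y p))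
        = ∫ y in Ystar N T, ((c1 * c2 * A.a p k y - c1 * (A.a p k y * Dχ i y p))
            - (c2 * (A.a p k y * Dχ j y k) - A.a p k y * Dχ j y k * Dχ i y p)) := by
          simp only [hptw]
      _ = c1 * c2 * (∫ y in Ystar N T, A.a p k y)
            - c1 * (∫ y in Ystar N T, A.a p k y * Dχ i y p)
            - c2 * (∫ y in Ystar N T, A.a p k y * Dχ j y k)
            + ∫ y in Ystar N T, A.a p k y * Dχ j y k * Dχ i y p := by
          have iA : Integrable (fun y => c1 * c2 * A.a p k y)
              (volume.restrict (Ystar N T)) := by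
            have := (hIa p k).const_mul (c1 * c2); simpa [mul_assoc] using this
          have iB : Integrable (fun y => c1 * (A.a p k y * Dχ i y p))
              (volume.restrict (Ystar N T)) := (hIaf p k _ (hD i p)).const_mul _
          have iC : Integrable (fun y => c2 * (A.a p k y * Dχ j y k))
              (volume.restrict (Ystar N T)) := (hIaf p k _ (hD j k)).const_mul _
          have iD : Integrable (fun y => A.a p k y * Dχ j y k * Dχ i y p)
              (volume.restrict (Ystar N T)) := hI3 p k _ _ (hD j k) (hD i p)
          have iAB : Integrable (fun y => c1 * c2 * A.a p k y
              - c1 * (A.a p k y * Dχ i y p)) (volume.restrict (Ystar N T)) := iA.sub iB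
          have iCD : Integrable (fun y => c2 * (A.a p k y * Dχ j y k)
              - A.a p k y * Dχ j y k * Dχ i y p) (volume.restrict (Ystar N T)) := iC.sub iD
          rw [integral_sub iAB iCD, integral_sub iA iB, integral_sub iC iD,
            integral_const_mul c1, integral_const_mul c2, mul_assoc c1 c2,
            integral_const_mul (c1 * c2)]
          ring
  -- alternative expression for the homogenized coefficients
  have qAlt : ∀ i j : Fin N, qCoeff N T A Dχ i j =
      ∑ p, ∑ k, ∫ y in Ystar N T, A.a p k y * ((if k = j then (1:ℝ) else 0) - Dχ j y k)
        * ((if p = i then (1:ℝ) else 0) - Dχ i y p) := by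
    intro i j
    have cell := (hχ j).2.2 (χ i) (Dχ i) (hχ i).1
    simp only [key1, Finset.sum_add_distrib, Finset.sum_sub_distrib, ite_mul, one_mul,
      zero_mul, Finset.sum_ite_irrel, Finset.sum_const_zero, Finset.sum_ite_eq',
      Finset.mem_univ, if_true]
    rw [qCoeff]
    linear_combination - cell
  refine ⟨fun i j => ?_, fun ξ => ?_⟩
  · -- symmetry
    rw [qAlt i j, qAlt j i]
    conv_rhs => rw [Finset.sum_comm]
    refine Finset.sum_congr rfl fun p _ => Finset.sum_congr rfl fun k _ => ?_
    refine integral_congr_ae (Eventually.of_forall fun y => ?_)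
    beta_reduce
    rw [A.symm p k y]; ring
  -- energy representation
  have hw : ∀ (y : Vec N) (k : Fin N), ξ k - ∑ j, ξ j * Dχ j y k
      = ∑ j, ξ j * ((if k = j then (1:ℝ) else 0) - Dχ j y k) := by
    intro y k
    simp [mul_sub, Finset.sum_sub_distrib, mul_ite, mul_one, mul_zero, Finset.sum_ite_eq]
  have hsplit : ∀ i k : Fin N,
      (∫ y in Ystar N T, A.a i k y * (ξ k - ∑ j, ξ j * Dχ j y k)
          * (ξ i - ∑ j, ξ j * Dχ j y i)) =
        ∑ j, ∑ m, (ξ j * ξ m) * ∫ y in Ystar N T,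
          A.a i k y * ((if k = j then (1:ℝ) else 0) - Dχ j y k)
            * ((if i = m then (1:ℝ) else 0) - Dχ m y i) := by
    intro i k
    have hptw : ∀ y : Vec N, A.a i k y * (ξ k - ∑ j, ξ j * Dχ j y k)
        * (ξ i - ∑ j, ξ j * Dχ j y i)
        = ∑ j, ∑ m, (ξ j * ξ m) * (A.a i k y * ((if k = j then (1:ℝ) else 0) - Dχ j y k)
            * ((if i = m then (1:ℝ) else 0) - Dχ m y i)) := by
      intro y
      rw [hw y k, hw y i, mul_assoc, Finset.sum_mul_sum, Finset.mul_sum]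
      refine Finset.sum_congr rfl fun j _ => ?_
      rw [Finset.mul_sum]
      exact Finset.sum_congr rfl fun m _ => by ring
    calc (∫ y in Ystar N T, A.a i k y * (ξ k - ∑ j, ξ j * Dχ j y k)
          * (ξ i - ∑ j, ξ j * Dχ j y i))
        = ∫ y in Ystar N T, ∑ j, ∑ m, (ξ j * ξ m)
            * (A.a i k y * ((if k = j then (1:ℝ) else 0) - Dχ j y k)
              * ((if i = m then (1:ℝ) else 0) - Dχ m y i)) := by
          simp only [hptw]
      _ = _ := by
          rw [integral_finset_sum _ (fun j _ => integrable_finset_sum _ fun m _ =>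
            (hI3 i k _ _ (hWb j k _) (hWb m i _)).const_mul _)]
          refine Finset.sum_congr rfl fun j _ => ?_
          rw [integral_finset_sum _ (fun m _ =>
            (hI3 i k _ _ (hWb j k _) (hWb m i _)).const_mul _)]
          exact Finset.sum_congr rfl fun m _ => integral_const_mul _ _
  have hrep : ∑ i, ∑ j, qCoeff N T A Dχ i j * ξ j * ξ i =
      ∑ i, ∑ k, ∫ y in Ystar N T,
        A.a i k y * (ξ k - ∑ j, ξ j * Dχ j y k) * (ξ i - ∑ j, ξ j * Dχ j y i) := by
    simp only [qAlt, hsplit, Finset.sum_mul]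
    rw [sum4_swap14]
    refine Finset.sum_congr rfl fun p _ => Finset.sum_congr rfl fun k _ =>
      Finset.sum_congr rfl fun j _ => Finset.sum_congr rfl fun i _ => by ring
  -- coercivity
  have hIw : ∀ i k : Fin N, Integrable (fun y => A.a i k y * (ξ k - ∑ j, ξ j * Dχ j y k)
      * (ξ i - ∑ j, ξ j * Dχ j y i)) (volume.restrict (Ystar N T)) :=
    fun i k => hI3 i k _ _ (hW ξ k) (hW ξ i)
  have hRHS : (∑ i, ∑ k, ∫ y in Ystar N T,
        A.a i k y * (ξ k - ∑ j, ξ j * Dχ j y k) * (ξ i - ∑ j, ξ j * Dχ j y i)) =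
      ∫ y in Ystar N T, ∑ i, ∑ k,
        A.a i k y * (ξ k - ∑ j, ξ j * Dχ j y k) * (ξ i - ∑ j, ξ j * Dχ j y i) := by
    rw [integral_finset_sum _ (fun i _ => integrable_finset_sum _ fun k _ => hIw i k)]
    exact Finset.sum_congr rfl fun i _ => (integral_finset_sum _ fun k _ => hIw i k).symm
  have hIsq : Integrable (fun y => ∑ i, (ξ i - ∑ j, ξ j * Dχ j y i) ^ 2)
      (volume.restrict (Ystar N T)) :=
    integrable_finset_sum _ fun i _ => (hW ξ i).integrable_sq
  have hcoer : A.alpha * ∫ y in Ystar N T, ∑ i, (ξ i - ∑ j, ξ j * Dχ j y i) ^ 2 ≤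
      ∑ i, ∑ k, ∫ y in Ystar N T,
        A.a i k y * (ξ k - ∑ j, ξ j * Dχ j y k) * (ξ i - ∑ j, ξ j * Dχ j y i) := by
    rw [hRHS, ← integral_const_mul]
    refine integral_mono (hIsq.const_mul _)
      (integrable_finset_sum _ fun i _ => integrable_finset_sum _ fun k _ => hIw i k) ?_
    intro y
    simpa using A.elliptic y (fun i => ξ i - ∑ j, ξ j * Dχ j y i)
  refine ⟨hrep, hcoer, ?_⟩
  exact mul_nonneg A.alpha_pos.le (integral_nonneg fun y =>
    Finset.sum_nonneg fun i _ => sq_nonneg _)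


end TwoScalePaper
end
end
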